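/- arXiv:math/0702895 — 2 statements merged into one kernel-verified Lean document; each statement's English description precedes it below -/
import Mathlib

section
/- Let A be an N×N real matrix such that there exists a real number λ and a vector w with all entries strictly positive satisfying Aᵀ w = λ w and λ > 0. If u is a vector with nonnegative entries such that every entry of A u is nonpositive, then u = 0. -/
/-!
Pair the subsolution with the positive eigenvector: `λ ⟨w, u⟩ = ⟨Aᵀ w, u⟩ = ⟨w, A u⟩ ≤ 0`,
so `⟨w, u⟩ ≤ 0`; a nonnegative vector with nonpositive pairing against a strictly positive one
vanishes.
-/

open scoped Matrix

namespace Matrix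

variable {n R : Type*} [Fintype n]

lemma dotProduct_mulVec_eq_mul_of_transpose_mulVec_eq_smul [CommSemiring R]
    {A : Matrix n n R} {w : n → R} {lam : R} (heig : Aᵀ *ᵥ w = lam • w) (u : n → R) :
    w ⬝ᵥ (A *ᵥ u) = lam * (w ⬝ᵥ u) := by
  rw [dotProduct_mulVec, ← mulVec_transpose, heig, smul_dotProduct, smul_eq_mul]

lemma dotProduct_nonpos_of_nonneg_of_nonpos [Semiring R] [PartialOrder R] [IsOrderedRing R]
    {v w : n → R} (hv : 0 ≤ v) (hw : w ≤ 0) : v ⬝ᵥ w ≤ 0 :=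
  Finset.sum_nonpos fun i _ => mul_nonpos_of_nonneg_of_nonpos (hv i) (hw i)

lemma eq_zero_of_dotProduct_nonpos_of_pos [Semiring R] [LinearOrder R] [IsStrictOrderedRing R]
    {w u : n → R} (hw : ∀ i, 0 < w i) (hu : 0 ≤ u) (h : w ⬝ᵥ u ≤ 0) : u = 0 := by
  have hterm : ∀ i ∈ Finset.univ, 0 ≤ w i * u i := fun i _ => mul_nonneg (hw i).le (hu i)
  have hsum : w ⬝ᵥ u = 0 := le_antisymm h (Finset.sum_nonneg hterm)
  funext i
  have hwu : w i * u i = 0 :=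
    (Finset.sum_eq_zero_iff_of_nonneg hterm).mp hsum i (Finset.mem_univ i)
  exact le_antisymm (not_lt.mp fun hpos => (mul_pos (hw i) hpos).ne' hwu) (hu i)

end Matrix

theorem stmt_0 {N : ℕ} (A : Matrix (Fin N) (Fin N) ℝ)
    (w : Fin N → ℝ) (hw : ∀ i, w i > 0) (lam : ℝ) (hlam : lam > 0)
    (heig : A.transpose.mulVec w = lam • w)
    (u : Fin N → ℝ) (hu : ∀ i, u i ≥ 0) (hAu : ∀ i, (A.mulVec u) i ≤ 0) :
    u = 0 := by
  have hweighted : lam * (w ⬝ᵥ u) ≤ 0 := by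
    rw [← Matrix.dotProduct_mulVec_eq_mul_of_transpose_mulVec_eq_smul heig]
    exact Matrix.dotProduct_nonpos_of_nonneg_of_nonpos (fun i => (hw i).le) hAu
  exact Matrix.eq_zero_of_dotProduct_nonpos_of_pos hw hu
    (nonpos_of_mul_nonpos_right hweighted hlam)
end

section
/- Finite-dimensional version of Theorem 4 (diagonal cooperative part): let L = diag(L₁,...,L_N) ∈ ℝ^{N×N} be diagonal and M an N×N matrix whose off-diagonal entries are all nonnegative (M⁻ is diagonal). Suppose for each k there is λ_k ∈ ℝ and w_k > 0 with L_k + min(M k k, 0) = λ_k (scalar eigenvalue, eigenfunction w_k). If for every j, λ_j * w_j + ∑ₖ (M⁺) k j * w_k > 0, then any u ≥ 0 with (L + M) u ≤ 0 entrywise is zero. -/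
/-!
Pair the inequality `(L + M) u ≤ 0` with the positive weights `w`: since `w ≥ 0`,
`0 ≥ w ⬝ᵥ ((L + M) u) = (w ᵥ* (L + M)) ⬝ᵥ u`. Splitting the diagonal of `M` into its
negative part (absorbed into `λ`) and its positive part, the `k`-th entry of `w ᵥ* (L + M)`
is `λ k * w k + ∑ i, max (M i k) 0 * w i > 0`, so a sum of nonnegative terms
`(w ᵥ* (L + M)) k * u k` vanishes, which forces every `u k` to vanish.
-/

open Matrix Finset

theorem Matrix.eq_zero_of_mulVec_nonpos_of_vecMul_pos {R m n : Type*} [CommRing R] [LinearOrder R]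
    [IsStrictOrderedRing R] [Fintype m] [Fintype n] (A : Matrix m n R) {w : m → R}
    (hw : ∀ i, 0 ≤ w i) (hwA : ∀ k, 0 < (w ᵥ* A) k) {u : n → R} (hu : ∀ k, 0 ≤ u k)
    (hAu : ∀ i, (A *ᵥ u) i ≤ 0) : u = 0 := by
  have hterm : ∀ k ∈ univ, 0 ≤ (w ᵥ* A) k * u k := fun k _ => mul_nonneg (hwA k).le (hu k)
  have hpair : (w ᵥ* A) ⬝ᵥ u ≤ 0 := by
    rw [← dotProduct_mulVec]
    exact sum_nonpos fun i _ => mul_nonpos_of_nonneg_of_nonpos (hw i) (hAu i)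
  have hzero := (sum_eq_zero_iff_of_nonneg hterm).mp (hpair.antisymm (sum_nonneg hterm))
  funext k
  exact (mul_eq_zero.mp (hzero k (mem_univ k))).resolve_left (hwA k).ne'

theorem Matrix.vecMul_apply_eq_min_diag_add_sum_max {R n : Type*} [CommRing R] [LinearOrder R]
    [IsStrictOrderedRing R] [Fintype n] [DecidableEq n] {M : Matrix n n R}
    (hoff : ∀ i j, i ≠ j → 0 ≤ M i j) (w : n → R) (k : n) :
    (w ᵥ* M) k = min (M k k) 0 * w k + ∑ i, max (M i k) 0 * w i := by
  have hcol : ∀ i,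
      w i * M i k = (if i = k then min (M k k) 0 * w k else 0) + max (M i k) 0 * w i := by
    intro i
    by_cases hik : i = k
    · subst hik
      rw [if_pos rfl, ← add_mul, min_add_max, add_zero, mul_comm]
    · rw [if_neg hik, max_eq_left (hoff i k hik), zero_add, mul_comm]
  simp only [vecMul, dotProduct, hcol, sum_add_distrib, sum_ite_eq', mem_univ, if_true]

theorem stmt_4 {N : ℕ} (d : Fin N → ℝ) (M : Matrix (Fin N) (Fin N) ℝ)
    (hoff : ∀ i j, i ≠ j → M i j ≥ 0)
    (lam : Fin N → ℝ) (hlam : ∀ k, lam k = d k + min (M k k) 0)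
    (w : Fin N → ℝ) (hw : ∀ k, w k > 0)
    (hpos : ∀ j, lam j * w j + ∑ k, max (M k j) 0 * w k > 0)
    (u : Fin N → ℝ) (hu : ∀ i, u i ≥ 0)
    (hAu : ∀ i, ((Matrix.diagonal d + M).mulVec u) i ≤ 0) :
    u = 0 := by
  refine (diagonal d + M).eq_zero_of_mulVec_nonpos_of_vecMul_pos (fun k => (hw k).le) ?_ hu hAu
  intro k
  have hentry : (w ᵥ* (diagonal d + M)) k = lam k * w k + ∑ i, max (M i k) 0 * w i := by
    rw [vecMul_add, Pi.add_apply, vecMul_diagonal, vecMul_apply_eq_min_diag_add_sum_max hoff,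
      hlam]
    ring
  exact hentry ▸ hpos k
end
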